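/- arXiv:1302.2755 — 3 statements merged into one kernel-verified Lean document; each statement's English description precedes it below -/
import Mathlib

section
/- Let λ ≤ 0 be a real number. Then for all x, y ∈ (0,1), M_λ(m(x), m(y)) ≤ m(M_λ(x, y)). -/
open Real Set Filter

/-- Complete elliptic integral of the first kind. -/
noncomputable def K (r : ℝ) : ℝ :=
  ∫ θ in (0:ℝ)..(π/2), 1 / Real.sqrt (1 - r^2 * Real.sin θ ^ 2)

/-- Complete elliptic integral of the second kind. -/
noncomputable def E (r : ℝ) : ℝ :=
  ∫ θ in (0:ℝ)..(π/2), Real.sqrt (1 - r^2 * Real.sin θ ^ 2)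

/-- Complementary complete elliptic integral of the first kind: `K'(r) = K(√(1-r²))`. -/
noncomputable def K' (r : ℝ) : ℝ := K (Real.sqrt (1 - r^2))

/-- Complementary complete elliptic integral of the second kind: `E'(r) = E(√(1-r²))`. -/
noncomputable def E' (r : ℝ) : ℝ := E (Real.sqrt (1 - r^2))

/-- The special function `m(r) = (2/π) r'² K(r) K'(r)` (here `r'² = 1 - r²`). -/
noncomputable def m (r : ℝ) : ℝ := (2/π) * (1 - r^2) * K r * K' r

/-- The power mean of order `lam`: `M_λ(x,y)`. -/
noncomputable def pmean (lam x y : ℝ) : ℝ :=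
  if lam = 0 then Real.sqrt (x * y) else ((x ^ lam + y ^ lam) / 2) ^ (1 / lam)

/-!
Since `M_λ ≤ M_0` for `λ ≤ 0` and `m` decreases on `(0,1)`, it suffices to show that `m` is
geometrically concave, `√(m x · m y) ≤ m(√(xy))`, i.e. that `u ↦ log m(eᵘ)` is concave on
`(-∞, 0)`. The derivative of that function is the elasticity `r m'(r)/m(r)`. Differentiating
under the integral sign gives the classical formulas `dE/dr = (E - K)/r` and
`dK/dr = (E - r'²K)/(r r'²)`, and with them the derivative of the elasticity is
`-((K'(K - E))² + (K E')² + 2(r K K')²) / (r (r'² K K')²) < 0`.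
-/

open intervalIntegral MeasureTheory Function

theorem hasDerivAt_intervalIntegral_of_continuousOn_deriv {F F' : ℝ → ℝ → ℝ} {U : Set ℝ}
    {x₀ a b : ℝ}
    (hU : IsOpen U) (hx₀ : x₀ ∈ U) (hF : ∀ x ∈ U, Continuous (F x))
    (hF' : ContinuousOn (uncurry F') (U ×ˢ univ))
    (hderiv : ∀ x ∈ U, ∀ t, HasDerivAt (fun y => F y t) (F' x t) x) :
    HasDerivAt (fun x => ∫ t in a..b, F x t) (∫ t in a..b, F' x₀ t) x₀ := by
  obtain ⟨δ, hδ, hball⟩ := Metric.isOpen_iff.1 hU x₀ hx₀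
  have hsub : Metric.closedBall x₀ (δ / 2) ⊆ U :=
    (Metric.closedBall_subset_ball (half_lt_self hδ)).trans hball
  obtain ⟨C, hC⟩ := ((isCompact_closedBall x₀ (δ / 2)).prod isCompact_uIcc)
    |>.exists_bound_of_continuousOn (hF'.mono (prod_mono hsub (subset_univ (uIcc a b))))
  have hF'₀ : Continuous (F' x₀) :=
    hF'.comp_continuous (continuous_const.prodMk continuous_id) fun _ => ⟨hx₀, trivial⟩
  refine (hasDerivAt_integral_of_dominated_loc_of_deriv_le (bound := fun _ => C)
    (Metric.ball_mem_nhds x₀ (half_pos hδ))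
    (eventually_of_mem (hU.mem_nhds hx₀) fun x hx => (hF x hx).aestronglyMeasurable)
    ((hF x₀ hx₀).intervalIntegrable a b) hF'₀.aestronglyMeasurable ?_ intervalIntegrable_const
    ?_).2
  · exact ae_of_all _ fun t ht x hx =>
      hC (x, t) ⟨Metric.ball_subset_closedBall hx, uIoc_subset_uIcc ht⟩
  · exact ae_of_all _ fun t _ x hx =>
      hderiv x (hsub (Metric.ball_subset_closedBall hx)) t

lemma sq_lt_one_of_mem_Ioo {x : ℝ} (hx : x ∈ Ioo (-1 : ℝ) 1) : x ^ 2 < 1 :=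
  (sq_lt_one_iff_abs_lt_one x).2 (abs_lt.2 hx)

lemma mem_Ioo_of_sq_lt_one {r : ℝ} (hr : r ^ 2 < 1) : r ∈ Ioo (-1 : ℝ) 1 :=
  abs_lt.1 ((sq_lt_one_iff_abs_lt_one r).1 hr)

noncomputable def Δ (r θ : ℝ) : ℝ := √(1 - r ^ 2 * sin θ ^ 2)

lemma K_eq_integral_inv_Δ (r : ℝ) : K r = ∫ θ in (0:ℝ)..(π/2), 1 / Δ r θ := rfl

lemma E_eq_integral_Δ (r : ℝ) : E r = ∫ θ in (0:ℝ)..(π/2), Δ r θ := rfl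

section Delta
variable {r : ℝ}

lemma continuous_uncurry_Δ : Continuous (uncurry Δ) := by
  unfold Δ; fun_prop

lemma continuous_Δ (r : ℝ) : Continuous (Δ r) := by
  unfold Δ; fun_prop

lemma one_sub_sq_mul_sin_sq_pos (hr : r ^ 2 < 1) (θ : ℝ) : 0 < 1 - r ^ 2 * sin θ ^ 2 := by
  nlinarith [sin_sq_le_one θ, mul_le_mul_of_nonneg_left (sin_sq_le_one θ) (sq_nonneg r)]

lemma Δ_pos (hr : r ^ 2 < 1) (θ : ℝ) : 0 < Δ r θ :=
  sqrt_pos.2 (one_sub_sq_mul_sin_sq_pos hr θ)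

lemma Δ_sq (hr : r ^ 2 < 1) (θ : ℝ) : Δ r θ ^ 2 = 1 - r ^ 2 * sin θ ^ 2 :=
  sq_sqrt (one_sub_sq_mul_sin_sq_pos hr θ).le

lemma Δ_le_one (r θ : ℝ) : Δ r θ ≤ 1 :=
  sqrt_le_one.2 (by nlinarith [sq_nonneg r, sq_nonneg (sin θ)])

lemma continuous_inv_Δ (hr : r ^ 2 < 1) : Continuous fun θ => 1 / Δ r θ :=
  continuous_const.div (continuous_Δ r) fun θ => (Δ_pos hr θ).ne'

lemma hasDerivAt_Δ_modulus (hr : r ^ 2 < 1) (θ : ℝ) :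
    HasDerivAt (fun x => Δ x θ) (-(r * sin θ ^ 2) / Δ r θ) r := by
  have h := ((hasDerivAt_pow 2 r).mul_const (sin θ ^ 2)).const_sub 1
  refine (h.sqrt (one_sub_sq_mul_sin_sq_pos hr θ).ne').congr_deriv ?_
  have := (Δ_pos hr θ).ne'
  simp only [Δ] at *
  field_simp
  norm_num
  ring

lemma hasDerivAt_Δ_angle (hr : r ^ 2 < 1) (θ : ℝ) :
    HasDerivAt (Δ r) (-(r ^ 2 * sin θ * cos θ) / Δ r θ) θ := by
  have h := (((hasDerivAt_sin θ).fun_pow 2).const_mul (r ^ 2)).const_sub 1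
  refine (h.sqrt (one_sub_sq_mul_sin_sq_pos hr θ).ne').congr_deriv ?_
  have := (Δ_pos hr θ).ne'
  simp only [Δ] at *
  field_simp
  norm_num
  ring

end Delta

section EllipticIntegrals
variable {r : ℝ}

lemma E_pos (hr : r ^ 2 < 1) : 0 < E r :=
  intervalIntegral_pos_of_pos_on ((continuous_Δ r).intervalIntegrable _ _)
    (fun θ _ => Δ_pos hr θ) (by positivity)

lemma K_pos (hr : r ^ 2 < 1) : 0 < K r :=
  intervalIntegral_pos_of_pos_on ((continuous_inv_Δ hr).intervalIntegrable _ _)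
    (fun θ _ => one_div_pos.2 (Δ_pos hr θ)) (by positivity)

lemma E_le_K (hr : r ^ 2 < 1) : E r ≤ K r :=
  integral_mono_on (by positivity) ((continuous_Δ r).intervalIntegrable _ _)
    ((continuous_inv_Δ hr).intervalIntegrable _ _) fun θ _ =>
      (Δ_le_one r θ).trans (one_le_one_div (Δ_pos hr θ) (Δ_le_one r θ))

lemma hasDerivAt_E (hr0 : r ≠ 0) (hr : r ^ 2 < 1) : HasDerivAt E ((E r - K r) / r) r := by
  have hderiv := hasDerivAt_intervalIntegral_of_continuousOn_deriv (a := 0) (b := π / 2)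
    (F := Δ) (F' := fun x θ => -(x * sin θ ^ 2) / Δ x θ) isOpen_Ioo (mem_Ioo_of_sq_lt_one hr)
    (fun x _ => continuous_Δ x)
    (ContinuousOn.div₀ (by fun_prop) continuous_uncurry_Δ.continuousOn
      fun p hp => (Δ_pos (sq_lt_one_of_mem_Ioo (mem_prod.1 hp).1) p.2).ne')
    (fun x hx θ => hasDerivAt_Δ_modulus (sq_lt_one_of_mem_Ioo hx) θ)
  have hintegrand : ∀ θ, -(r * sin θ ^ 2) / Δ r θ = (Δ r θ - 1 / Δ r θ) / r := by
    intro θ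
    have := (Δ_pos hr θ).ne'
    field_simp
    linear_combination -Δ_sq hr θ
  rwa [funext hintegrand, intervalIntegral.integral_div,
    integral_sub ((continuous_Δ r).intervalIntegrable _ _)
      ((continuous_inv_Δ hr).intervalIntegrable _ _)] at hderiv

lemma continuous_inv_Δ_pow_three (hr : r ^ 2 < 1) : Continuous fun θ => 1 / Δ r θ ^ 3 :=
  continuous_const.div ((continuous_Δ r).pow 3) fun θ => (pow_pos (Δ_pos hr θ) 3).ne'

lemma hasDerivAt_inv_Δ_modulus (hr : r ^ 2 < 1) (θ : ℝ) :
    HasDerivAt (fun x => 1 / Δ x θ) (r * sin θ ^ 2 / Δ r θ ^ 3) r := by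
  have := (Δ_pos hr θ).ne'
  refine ((hasDerivAt_const r 1).div (hasDerivAt_Δ_modulus hr θ) this).congr_deriv ?_
  field_simp
  ring

lemma hasDerivAt_sin_mul_cos_div_Δ (hr : r ^ 2 < 1) (θ : ℝ) :
    HasDerivAt (fun t => r ^ 2 * sin t * cos t / Δ r t)
      (Δ r θ - (1 - r ^ 2) / Δ r θ ^ 3) θ := by
  have := (Δ_pos hr θ).ne'
  refine ((((hasDerivAt_sin θ).const_mul (r ^ 2)).fun_mul (hasDerivAt_cos θ)).div
    (hasDerivAt_Δ_angle hr θ) this).congr_deriv ?_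
  field_simp
  linear_combination (r ^ 2 - r ^ 2 * sin θ ^ 2 - Δ r θ ^ 2 - 1) * Δ_sq hr θ
    + (r ^ 2 * Δ r θ ^ 2 + r ^ 4 * sin θ ^ 2) * sin_sq_add_cos_sq θ

lemma integral_inv_Δ_pow_three (hr : r ^ 2 < 1) :
    ∫ θ in (0:ℝ)..(π/2), 1 / Δ r θ ^ 3 = E r / (1 - r ^ 2) := by
  have hr' : 1 - r ^ 2 ≠ 0 := by linarith
  have hzero : ∫ θ in (0:ℝ)..(π/2), (Δ r θ - (1 - r ^ 2) / Δ r θ ^ 3) = 0 := by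
    have hcont : Continuous fun θ => Δ r θ - (1 - r ^ 2) / Δ r θ ^ 3 :=
      (continuous_Δ r).sub (continuous_const.div ((continuous_Δ r).pow 3)
        fun θ => (pow_pos (Δ_pos hr θ) 3).ne')
    rw [integral_eq_sub_of_hasDerivAt (fun θ _ => hasDerivAt_sin_mul_cos_div_Δ hr θ)
      (hcont.intervalIntegrable _ _)]
    simp
  simp only [div_eq_mul_one_div (1 - r ^ 2)] at hzero
  rw [integral_sub ((continuous_Δ r).intervalIntegrable _ _)
    ((continuous_inv_Δ_pow_three hr).intervalIntegrable _ _ |>.const_mul _),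
    intervalIntegral.integral_const_mul, ← E_eq_integral_Δ] at hzero
  field_simp
  linarith

lemma hasDerivAt_K (hr0 : r ≠ 0) (hr : r ^ 2 < 1) :
    HasDerivAt K ((E r - (1 - r ^ 2) * K r) / (r * (1 - r ^ 2))) r := by
  have hderiv := hasDerivAt_intervalIntegral_of_continuousOn_deriv (a := 0) (b := π / 2)
    (F := fun x θ => 1 / Δ x θ) (F' := fun x θ => x * sin θ ^ 2 / Δ x θ ^ 3) isOpen_Ioo
    (mem_Ioo_of_sq_lt_one hr) (fun x hx => continuous_inv_Δ (sq_lt_one_of_mem_Ioo hx))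
    (ContinuousOn.div₀ (by fun_prop) (continuous_uncurry_Δ.pow 3).continuousOn
      fun p hp => (pow_pos (Δ_pos (sq_lt_one_of_mem_Ioo (mem_prod.1 hp).1) p.2) 3).ne')
    (fun x hx θ => hasDerivAt_inv_Δ_modulus (sq_lt_one_of_mem_Ioo hx) θ)
  have hintegrand : ∀ θ, r * sin θ ^ 2 / Δ r θ ^ 3 = (1 / Δ r θ ^ 3 - 1 / Δ r θ) / r := by
    intro θ
    have := (Δ_pos hr θ).ne'
    field_simp
    linear_combination Δ_sq hr θ
  have hr' : 1 - r ^ 2 ≠ 0 := by linarith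
  rw [funext hintegrand, intervalIntegral.integral_div,
    integral_sub ((continuous_inv_Δ_pow_three hr).intervalIntegrable _ _)
      ((continuous_inv_Δ hr).intervalIntegrable _ _), integral_inv_Δ_pow_three hr,
    ← K_eq_integral_inv_Δ]
    at hderiv
  refine hderiv.congr_deriv ?_
  field_simp

end EllipticIntegrals

section Complementary
variable {r : ℝ}

lemma sq_sqrt_one_sub_sq_lt_one (hr : r ∈ Ioo (0:ℝ) 1) : √(1 - r ^ 2) ^ 2 < 1 := by
  rw [sq_sqrt (by nlinarith [hr.2, hr.1])]
  nlinarith [hr.1]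

lemma K'_pos (hr : r ∈ Ioo (0:ℝ) 1) : 0 < K' r := K_pos (sq_sqrt_one_sub_sq_lt_one hr)

lemma E'_pos (hr : r ∈ Ioo (0:ℝ) 1) : 0 < E' r := E_pos (sq_sqrt_one_sub_sq_lt_one hr)

lemma hasDerivAt_sqrt_one_sub_sq (hr : r ∈ Ioo (0:ℝ) 1) :
    HasDerivAt (fun x => √(1 - x ^ 2)) (-r / √(1 - r ^ 2)) r := by
  have hr' : 0 < 1 - r ^ 2 := by nlinarith [hr.1, hr.2]
  refine (((hasDerivAt_pow 2 r).const_sub 1).sqrt hr'.ne').congr_deriv ?_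
  have := (sqrt_pos.2 hr').ne'
  field_simp
  norm_num

lemma hasDerivAt_K' (hr : r ∈ Ioo (0:ℝ) 1) :
    HasDerivAt K' (-(E' r - r ^ 2 * K' r) / (r * (1 - r ^ 2))) r := by
  have hr' : 0 < 1 - r ^ 2 := by nlinarith [hr.1, hr.2]
  have hs := sqrt_pos.2 hr'
  refine ((hasDerivAt_K hs.ne' (sq_sqrt_one_sub_sq_lt_one hr)).comp r
    (hasDerivAt_sqrt_one_sub_sq hr)).congr_deriv ?_
  rw [show K √(1 - r ^ 2) = K' r from rfl, show E √(1 - r ^ 2) = E' r from rfl,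
    sq_sqrt hr'.le]
  have := hr.1.ne'
  field_simp
  rw [sq_sqrt hr'.le]
  ring

lemma hasDerivAt_E' (hr : r ∈ Ioo (0:ℝ) 1) :
    HasDerivAt E' (-(r * (E' r - K' r)) / (1 - r ^ 2)) r := by
  have hr' : 0 < 1 - r ^ 2 := by nlinarith [hr.1, hr.2]
  have hs := sqrt_pos.2 hr'
  refine ((hasDerivAt_E hs.ne' (sq_sqrt_one_sub_sq_lt_one hr)).comp r
    (hasDerivAt_sqrt_one_sub_sq hr)).congr_deriv ?_
  rw [show K √(1 - r ^ 2) = K' r from rfl, show E √(1 - r ^ 2) = E' r from rfl]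
  field_simp
  rw [sq_sqrt hr'.le]

end Complementary

section FunctionM
variable {r : ℝ}

lemma m_pos (hr : r ∈ Ioo (0:ℝ) 1) : 0 < m r := by
  have hr2 : r ^ 2 < 1 := by nlinarith [hr.1, hr.2]
  have : 0 < 1 - r ^ 2 := by linarith
  have := K_pos hr2
  have := K'_pos hr
  unfold m
  positivity

lemma hasDerivAt_m (hr : r ∈ Ioo (0:ℝ) 1) :
    HasDerivAt m (2 / (π * r) * (K' r * E r - K r * E' r - K r * K' r)) r := by
  have hr2 : r ^ 2 < 1 := by nlinarith [hr.1, hr.2]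
  have hr' : 1 - r ^ 2 ≠ 0 := by linarith
  have := hr.1.ne'
  have := pi_pos.ne'
  refine (((((hasDerivAt_pow 2 r).const_sub 1).const_mul (2 / π)).fun_mul
    (hasDerivAt_K hr.1.ne' hr2)).fun_mul (hasDerivAt_K' hr)).congr_deriv ?_
  field_simp
  ring

/-- `r m'(r) / m(r)`, the derivative of `u ↦ log m(eᵘ)` at `u = log r`. -/
noncomputable def mElasticity (r : ℝ) : ℝ :=
  (K' r * E r - K r * E' r - K r * K' r) / ((1 - r ^ 2) * K r * K' r)

lemma hasDerivAt_mElasticity (hr : r ∈ Ioo (0:ℝ) 1) :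
    HasDerivAt mElasticity (-((K' r * (K r - E r)) ^ 2 + (K r * E' r) ^ 2
      + 2 * (r * K r * K' r) ^ 2) / (r * ((1 - r ^ 2) * K r * K' r) ^ 2)) r := by
  have hr2 : r ^ 2 < 1 := by nlinarith [hr.1, hr.2]
  have hr' : 1 - r ^ 2 ≠ 0 := by linarith
  have := hr.1.ne'
  have := (K_pos hr2).ne'
  have := (K'_pos hr).ne'
  have hK := hasDerivAt_K hr.1.ne' hr2
  have hE := hasDerivAt_E hr.1.ne' hr2
  have hK' := hasDerivAt_K' hr
  have hE' := hasDerivAt_E' hr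
  refine ((((hK'.fun_mul hE).fun_sub (hK.fun_mul hE')).fun_sub (hK.fun_mul hK')).div
    ((((hasDerivAt_pow 2 r).const_sub 1).fun_mul hK).fun_mul hK') (by positivity)).congr_deriv ?_
  field_simp
  ring

end FunctionM

section Monotonicity

lemma m_antitoneOn : AntitoneOn m (Ioo (0:ℝ) 1) := by
  refine antitoneOn_of_hasDerivWithinAt_nonpos (convex_Ioo 0 1)
    (fun r hr => (hasDerivAt_m hr).continuousAt.continuousWithinAt)
    (fun r hr => (hasDerivAt_m (interior_subset hr)).hasDerivWithinAt) fun r hr => ?_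
  rw [interior_Ioo] at hr
  have hr2 : r ^ 2 < 1 := by nlinarith [hr.1, hr.2]
  have := hr.1
  have := K_pos hr2
  have := K'_pos hr
  have := E'_pos hr
  have := E_le_K hr2
  have hN : K' r * E r - K r * E' r - K r * K' r ≤ 0 := by nlinarith
  exact mul_nonpos_of_nonneg_of_nonpos (by positivity) hN

lemma mElasticity_antitoneOn : AntitoneOn mElasticity (Ioo (0:ℝ) 1) := by
  refine antitoneOn_of_hasDerivWithinAt_nonpos (convex_Ioo 0 1)
    (fun r hr => (hasDerivAt_mElasticity hr).continuousAt.continuousWithinAt)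
    (fun r hr => (hasDerivAt_mElasticity (interior_subset hr)).hasDerivWithinAt) fun r hr => ?_
  rw [interior_Ioo] at hr
  have := hr.1
  exact div_nonpos_of_nonpos_of_nonneg (neg_nonpos.2 (by positivity)) (by positivity)

lemma hasDerivAt_log_m_exp {u : ℝ} (hu : u < 0) :
    HasDerivAt (fun u => log (m (exp u))) (mElasticity (exp u)) u := by
  have hr : exp u ∈ Ioo (0:ℝ) 1 := ⟨exp_pos u, exp_lt_one_iff.2 hu⟩
  refine (((hasDerivAt_m hr).comp u (hasDerivAt_exp u)).log (m_pos hr).ne').congr_deriv ?_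
  have hr2 : exp u ^ 2 < 1 := by nlinarith [hr.1, hr.2]
  have : 1 - exp u ^ 2 ≠ 0 := by linarith
  have := (K_pos hr2).ne'
  have := (K'_pos hr).ne'
  have := pi_pos.ne'
  have := (exp_pos u).ne'
  rw [Function.comp_apply]
  unfold m mElasticity
  field_simp

lemma concaveOn_log_m_exp : ConcaveOn ℝ (Iio 0) fun u => log (m (exp u)) := by
  refine AntitoneOn.concaveOn_of_deriv (convex_Iio 0)
    (fun u hu => (hasDerivAt_log_m_exp hu).continuousAt.continuousWithinAt)
    (fun u hu =>
      (hasDerivAt_log_m_exp (mem_Iio.1 (interior_subset hu))).differentiableAt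
        |>.differentiableWithinAt) ?_
  rw [interior_Iio]
  intro u hu v hv huv
  rw [(hasDerivAt_log_m_exp hu).deriv, (hasDerivAt_log_m_exp hv).deriv]
  exact mElasticity_antitoneOn ⟨exp_pos u, exp_lt_one_iff.2 hu⟩
    ⟨exp_pos v, exp_lt_one_iff.2 hv⟩
    (exp_le_exp.2 huv)

lemma sqrt_mul_mem_Ioo {x y : ℝ} (hx : x ∈ Ioo (0:ℝ) 1) (hy : y ∈ Ioo (0:ℝ) 1) :
    √(x * y) ∈ Ioo (0:ℝ) 1 :=
  ⟨sqrt_pos.2 (mul_pos hx.1 hy.1), (sqrt_lt' one_pos).2 (by nlinarith [hx.1, hx.2, hy.1, hy.2])⟩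

lemma exp_half_log_add_half_log {a b : ℝ} (ha : 0 < a) (hb : 0 < b) :
    exp (1 / 2 * log a + 1 / 2 * log b) = √(a * b) := by
  rw [sqrt_eq_rpow, rpow_def_of_pos (mul_pos ha hb), log_mul ha.ne' hb.ne']
  ring_nf

lemma sqrt_mul_m_le_m_sqrt_mul {x y : ℝ} (hx : x ∈ Ioo (0:ℝ) 1) (hy : y ∈ Ioo (0:ℝ) 1) :
    √(m x * m y) ≤ m √(x * y) := by
  have hconc := concaveOn_log_m_exp.2 (log_neg hx.1 hx.2) (log_neg hy.1 hy.2)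
    (by norm_num : (0:ℝ) ≤ 1 / 2) (by norm_num : (0:ℝ) ≤ 1 / 2) (by norm_num)
  simp only [smul_eq_mul, exp_log hx.1, exp_log hy.1, exp_half_log_add_half_log hx.1 hy.1]
    at hconc
  rw [← exp_half_log_add_half_log (m_pos hx) (m_pos hy),
    ← exp_log (m_pos (sqrt_mul_mem_Ioo hx hy))]
  exact exp_le_exp.2 hconc

end Monotonicity

section PowerMean
variable {lam x y : ℝ}

lemma pmean_pos (hx : 0 < x) (hy : 0 < y) : 0 < pmean lam x y := by
  unfold pmean
  split_ifs
  · exact sqrt_pos.2 (mul_pos hx hy)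
  · exact rpow_pos_of_pos (by positivity) _

lemma pmean_le_sqrt_mul (hlam : lam ≤ 0) (hx : 0 < x) (hy : 0 < y) :
    pmean lam x y ≤ √(x * y) := by
  unfold pmean
  split_ifs with h
  · exact le_rfl
  have hlam' : lam < 0 := lt_of_le_of_ne hlam h
  have hxy := mul_pos hx hy
  have hgm : (x * y) ^ (lam / 2) ≤ (x ^ lam + y ^ lam) / 2 := by
    have := geom_mean_le_arith_mean2_weighted (by norm_num : (0:ℝ) ≤ 1 / 2)
      (by norm_num : (0:ℝ) ≤ 1 / 2) (rpow_pos_of_pos hx lam).le (rpow_pos_of_pos hy lam).le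
      (by norm_num)
    rw [← rpow_mul hx.le, ← rpow_mul hy.le, ← mul_rpow hx.le hy.le, mul_one_div] at this
    linarith
  calc ((x ^ lam + y ^ lam) / 2) ^ (1 / lam)
      ≤ ((x * y) ^ (lam / 2)) ^ (1 / lam) :=
        rpow_le_rpow_of_nonpos (rpow_pos_of_pos hxy _) hgm (one_div_neg.2 hlam').le
    _ = √(x * y) := by
        rw [← rpow_mul hxy.le, sqrt_eq_rpow]
        congr 1
        field_simp

end PowerMean

theorem stmt_0 (lam : ℝ) (hlam : lam ≤ 0) :
    ∀ x ∈ Set.Ioo (0:ℝ) 1, ∀ y ∈ Set.Ioo (0:ℝ) 1,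
      pmean lam (m x) (m y) ≤ m (pmean lam x y) := by
  intro x hx y hy
  have hsqrt := sqrt_mul_mem_Ioo hx hy
  have hmean_le := pmean_le_sqrt_mul hlam hx.1 hy.1
  calc pmean lam (m x) (m y) ≤ √(m x * m y) := pmean_le_sqrt_mul hlam (m_pos hx) (m_pos hy)
    _ ≤ m √(x * y) := sqrt_mul_m_le_m_sqrt_mul hx hy
    _ ≤ m (pmean lam x y) :=
        m_antitoneOn ⟨pmean_pos hx.1 hy.1, hmean_le.trans_lt hsqrt.2⟩ hsqrt hmean_le
end

section
/- The function f₂(r) = (E(r) − r'² K(r)) / r² is strictly increasing and convex on (0,1), and it maps (0,1) onto (π/4, 1). -/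
open Real Set Filter

/-!
For `0 < r < 1` one has `E(r) - r'² K(r) = r² f₂(r)` with
`f₂(r) = ∫₀^{π/2} cos² θ / √(1 - r² sin² θ) dθ`, and this integral is continuous on `[0, 1]`
with `f₂(0) = π/4` and `f₂(1) = ∫₀^{π/2} cos θ dθ = 1`. For fixed `θ` the integrand is strictly
increasing in `r`, and convex in `r` because `u ↦ 1/√u` is convex and decreasing while
`r ↦ 1 - r² sin² θ` is concave; both properties pass to the integral. A continuous strictly
increasing function maps `(0, 1)` onto `(f₂(0), f₂(1))`.
-/

open MeasureTheory

theorem ConvexOn.comp_concaveOn_of_mapsTo {V : Type*} [AddCommGroup V] [Module ℝ V]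
    {s : Set V} {t : Set ℝ} {f : V → ℝ} {g : ℝ → ℝ} (hg : ConvexOn ℝ t g) (hf : ConcaveOn ℝ s f)
    (hg' : AntitoneOn g t) (hst : MapsTo f s t) : ConvexOn ℝ s (g ∘ f) :=
  ⟨hf.1, fun _ hx _ hy _ _ ha hb hab =>
    (hg' (hg.1 (hst hx) (hst hy) ha hb hab) (hst (hf.1 hx hy ha hb hab))
      (hf.2 hx hy ha hb hab)).trans (hg.2 (hst hx) (hst hy) ha hb hab)⟩

theorem hasDerivAt_one_div_sqrt {u : ℝ} (hu : 0 < u) :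
    HasDerivAt (fun u => 1 / √u) (-(1 / √u) ^ 3 / 2) u := by
  have hs : √u ≠ 0 := (sqrt_pos.2 hu).ne'
  refine ((hasDerivAt_const u (1 : ℝ)).div (hasDerivAt_sqrt hu.ne') hs).congr_deriv ?_
  field_simp
  ring

theorem strictAntiOn_one_div_sqrt : StrictAntiOn (fun u : ℝ => 1 / √u) (Ioi 0) :=
  fun _ hx _ _ hxy => one_div_lt_one_div_of_lt (sqrt_pos.2 hx) (sqrt_lt_sqrt hx.le hxy)

theorem convexOn_one_div_sqrt : ConvexOn ℝ (Ioi 0) (fun u : ℝ => 1 / √u) := by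
  refine MonotoneOn.convexOn_of_deriv (convex_Ioi 0)
    (fun u hu => (hasDerivAt_one_div_sqrt hu).continuousAt.continuousWithinAt) ?_ ?_ <;>
    rw [interior_Ioi]
  · exact fun u hu => (hasDerivAt_one_div_sqrt hu).differentiableAt.differentiableWithinAt
  · intro x hx y hy hxy
    rw [(hasDerivAt_one_div_sqrt hx).deriv, (hasDerivAt_one_div_sqrt hy).deriv]
    have := pow_le_pow_left₀ (by positivity) (strictAntiOn_one_div_sqrt.antitoneOn hx hy hxy) 3
    linarith

theorem strictMonoOn_intervalIntegral {α : Type*} [Preorder α] {s : Set α} {f : α → ℝ → ℝ}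
    {a b : ℝ} (hab : a < b) (hf : ∀ θ ∈ Ioo a b, StrictMonoOn (f · θ) s)
    (hint : ∀ r ∈ s, IntervalIntegrable (f r) volume a b) :
    StrictMonoOn (fun r => ∫ θ in a..b, f r θ) s := by
  intro x hx y hy hxy
  rw [← sub_pos, ← intervalIntegral.integral_sub (hint y hy) (hint x hx)]
  exact intervalIntegral.intervalIntegral_pos_of_pos_on ((hint y hy).sub (hint x hx))
    (fun θ hθ => sub_pos.2 (hf θ hθ hx hy hxy)) hab

theorem convexOn_intervalIntegral {V : Type*} [AddCommGroup V] [Module ℝ V] {s : Set V}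
    {f : V → ℝ → ℝ} {a b : ℝ} (hab : a ≤ b) (hs : Convex ℝ s)
    (hf : ∀ θ ∈ Icc a b, ConvexOn ℝ s (f · θ))
    (hint : ∀ r ∈ s, IntervalIntegrable (f r) volume a b) :
    ConvexOn ℝ s (fun r => ∫ θ in a..b, f r θ) := by
  refine ⟨hs, fun x hx y hy p q hp hq hpq => ?_⟩
  simp only [smul_eq_mul, ← intervalIntegral.integral_const_mul]
  rw [← intervalIntegral.integral_add ((hint x hx).const_mul p) ((hint y hy).const_mul q)]
  exact intervalIntegral.integral_mono_on hab (hint _ (hs hx hy hp hq hpq))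
    (((hint x hx).const_mul p).add ((hint y hy).const_mul q))
    (fun θ hθ => (hf θ hθ).2 hx hy hp hq hpq)

-- The integrand of `f₂` written in terms of `c = sin² θ`, so that `cos² θ = 1 - c`.
noncomputable def f₂Kernel (c r : ℝ) : ℝ := (1 - c) / √(1 - r ^ 2 * c)

noncomputable def f₂ (r : ℝ) : ℝ := ∫ θ in (0 : ℝ)..(π / 2), f₂Kernel (sin θ ^ 2) r

section f₂Kernel

variable {c : ℝ}

theorem one_sub_sq_mul_pos (hc₀ : 0 ≤ c) (hc₁ : c < 1) {r : ℝ} (hr : r ^ 2 ≤ 1) :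
    0 < 1 - r ^ 2 * c := by
  nlinarith [mul_le_mul_of_nonneg_right hr hc₀]

theorem f₂Kernel_nonneg (hc : c ≤ 1) (r : ℝ) : 0 ≤ f₂Kernel c r :=
  div_nonneg (sub_nonneg.2 hc) (sqrt_nonneg _)

theorem f₂Kernel_le_one (hc₀ : 0 ≤ c) (hc₁ : c ≤ 1) {r : ℝ} (hr : r ^ 2 ≤ 1) :
    f₂Kernel c r ≤ 1 := by
  refine div_le_one_of_le₀ ?_ (sqrt_nonneg _)
  calc 1 - c ≤ √(1 - c) := le_sqrt_of_sq_le (by nlinarith)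
    _ ≤ √(1 - r ^ 2 * c) := sqrt_le_sqrt (by nlinarith)

theorem continuousOn_f₂Kernel (hc₀ : 0 ≤ c) (hc₁ : c ≤ 1) :
    ContinuousOn (f₂Kernel c) (Icc 0 1) := by
  rcases hc₁.eq_or_lt with rfl | hc₁
  · exact (continuousOn_const (c := (0 : ℝ))).congr fun r _ => by simp [f₂Kernel]
  exact ContinuousOn.div continuousOn_const (by fun_prop) fun r hr =>
    (sqrt_pos.2 (one_sub_sq_mul_pos hc₀ hc₁ (pow_le_one₀ hr.1 hr.2))).ne'

theorem strictMonoOn_f₂Kernel (hc₀ : 0 < c) (hc₁ : c < 1) :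
    StrictMonoOn (f₂Kernel c) (Icc 0 1) := by
  intro x hx y hy hxy
  have hy' := one_sub_sq_mul_pos hc₀.le hc₁ (pow_le_one₀ hy.1 hy.2)
  have hxy' : x ^ 2 * c < y ^ 2 * c :=
    mul_lt_mul_of_pos_right (pow_lt_pow_left₀ hxy hx.1 two_ne_zero) hc₀
  exact div_lt_div_of_pos_left (sub_pos.2 hc₁) (sqrt_pos.2 hy')
    (sqrt_lt_sqrt hy'.le (by linarith))

theorem convexOn_f₂Kernel (hc₀ : 0 ≤ c) (hc₁ : c ≤ 1) : ConvexOn ℝ (Ioo 0 1) (f₂Kernel c) := by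
  have hconcave : ConcaveOn ℝ (Ioo 0 1) (fun r : ℝ => 1 - r ^ 2 * c) := by
    refine ⟨convex_Ioo 0 1, fun x _ y _ a b ha hb hab => ?_⟩
    obtain rfl : b = 1 - a := by linarith
    simp only [smul_eq_mul]
    nlinarith [mul_nonneg (mul_nonneg ha hb) (mul_nonneg hc₀ (sq_nonneg (x - y)))]
  have hmaps : MapsTo (fun r : ℝ => 1 - r ^ 2 * c) (Ioo 0 1) (Ioi 0) := fun r hr => by
    simp only [mem_Ioi]; nlinarith [hr.1, hr.2]
  have := (convexOn_one_div_sqrt.comp_concaveOn_of_mapsTo hconcave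
    strictAntiOn_one_div_sqrt.antitoneOn hmaps).smul (sub_nonneg.2 hc₁)
  refine this.congr fun r _ => ?_
  simp [f₂Kernel, div_eq_mul_inv]

end f₂Kernel

theorem measurable_f₂Kernel_sin_sq (r : ℝ) : Measurable fun θ => f₂Kernel (sin θ ^ 2) r := by
  unfold f₂Kernel
  fun_prop

theorem norm_f₂Kernel_sin_sq_le_one {r : ℝ} (hr : r ∈ Icc (0 : ℝ) 1) (θ : ℝ) :
    ‖f₂Kernel (sin θ ^ 2) r‖ ≤ 1 := by
  rw [norm_of_nonneg (f₂Kernel_nonneg (sin_sq_le_one θ) r)]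
  exact f₂Kernel_le_one (sq_nonneg _) (sin_sq_le_one θ) (pow_le_one₀ hr.1 hr.2)

theorem intervalIntegrable_f₂Kernel {r : ℝ} (hr : r ∈ Icc (0 : ℝ) 1) :
    IntervalIntegrable (fun θ => f₂Kernel (sin θ ^ 2) r) volume 0 (π / 2) :=
  intervalIntegrable_const.mono_fun' (measurable_f₂Kernel_sin_sq r).aestronglyMeasurable
    (ae_of_all _ (norm_f₂Kernel_sin_sq_le_one hr))

theorem sin_sq_mem_Ioo {θ : ℝ} (hθ : θ ∈ Ioo 0 (π / 2)) : sin θ ^ 2 ∈ Ioo 0 1 := by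
  have hsin : 0 < sin θ := sin_pos_of_pos_of_lt_pi hθ.1 (by linarith [hθ.2, pi_pos])
  have hcos : 0 < cos θ := cos_pos_of_mem_Ioo ⟨by linarith [hθ.1, pi_pos], hθ.2⟩
  exact ⟨by positivity, by nlinarith [sin_sq_add_cos_sq θ]⟩

theorem strictMonoOn_f₂ : StrictMonoOn f₂ (Icc 0 1) :=
  strictMonoOn_intervalIntegral (by positivity)
    (fun θ hθ => strictMonoOn_f₂Kernel (sin_sq_mem_Ioo hθ).1 (sin_sq_mem_Ioo hθ).2)
    fun _ hr => intervalIntegrable_f₂Kernel hr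

theorem convexOn_f₂ : ConvexOn ℝ (Ioo 0 1) f₂ :=
  convexOn_intervalIntegral (by positivity) (convex_Ioo 0 1)
    (fun θ _ => convexOn_f₂Kernel (sq_nonneg _) (sin_sq_le_one θ))
    fun _ hr => intervalIntegrable_f₂Kernel (Ioo_subset_Icc_self hr)

theorem continuousOn_f₂ : ContinuousOn f₂ (Icc 0 1) := fun r hr =>
  intervalIntegral.continuousWithinAt_of_dominated_interval (bound := fun _ => 1)
    (eventually_nhdsWithin_of_forall fun r' _ =>
      (measurable_f₂Kernel_sin_sq r').aestronglyMeasurable)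
    (eventually_nhdsWithin_of_forall fun _ hr' =>
      ae_of_all _ fun θ _ => norm_f₂Kernel_sin_sq_le_one hr' θ)
    intervalIntegrable_const
    (ae_of_all _ fun θ _ => continuousOn_f₂Kernel (sq_nonneg _) (sin_sq_le_one θ) r hr)

theorem f₂_zero : f₂ 0 = π / 4 := by
  simp [f₂, f₂Kernel, ← cos_sq', integral_cos_sq]
  ring

theorem f₂_one : f₂ 1 = 1 := by
  have hcos : EqOn (fun θ => f₂Kernel (sin θ ^ 2) 1) cos (uIcc 0 (π / 2)) := fun θ hθ => by
    rw [uIcc_of_le (by positivity)] at hθ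
    have := cos_nonneg_of_mem_Icc ⟨by linarith [hθ.1, pi_pos], hθ.2⟩
    simp only [f₂Kernel]
    rw [one_pow, one_mul, ← cos_sq', sqrt_sq this, sq, mul_self_div_self]
  simp [f₂, intervalIntegral.integral_congr hcos]

theorem E_sub_mul_K {r : ℝ} (hr : r ^ 2 < 1) : E r - (1 - r ^ 2) * K r = r ^ 2 * f₂ r := by
  have hpos (θ : ℝ) : 0 < 1 - r ^ 2 * sin θ ^ 2 := by
    nlinarith [mul_le_mul_of_nonneg_left (sin_sq_le_one θ) (sq_nonneg r)]
  have hK : Continuous fun θ => 1 / √(1 - r ^ 2 * sin θ ^ 2) :=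
    continuous_const.div (by fun_prop) fun θ => (sqrt_pos.2 (hpos θ)).ne'
  rw [E, K, f₂, ← intervalIntegral.integral_const_mul, ← intervalIntegral.integral_const_mul,
    ← intervalIntegral.integral_sub ((by fun_prop : Continuous _).intervalIntegrable _ _)
      ((hK.const_mul _).intervalIntegrable _ _)]
  refine intervalIntegral.integral_congr fun θ _ => ?_
  have hsq := sq_sqrt (hpos θ).le
  have hne := (sqrt_pos.2 (hpos θ)).ne'
  simp only [f₂Kernel]
  field_simp
  linear_combination hsq

theorem stmt_9 :
    StrictMonoOn (fun r : ℝ => (E r - (1 - r^2) * K r) / r^2) (Set.Ioo (0:ℝ) 1) ∧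
    ConvexOn ℝ (Set.Ioo (0:ℝ) 1) (fun r : ℝ => (E r - (1 - r^2) * K r) / r^2) ∧
    (fun r : ℝ => (E r - (1 - r^2) * K r) / r^2) '' Set.Ioo (0:ℝ) 1 = Set.Ioo (π/4) 1 := by
  have hf₂ : EqOn f₂ (fun r => (E r - (1 - r ^ 2) * K r) / r ^ 2) (Ioo 0 1) := fun r hr => by
    show _ = _ / _
    rw [E_sub_mul_K (pow_lt_one₀ hr.1.le hr.2 two_ne_zero),
      mul_div_cancel_left₀ _ (pow_ne_zero 2 hr.1.ne')]
  refine ⟨(strictMonoOn_f₂.mono Ioo_subset_Icc_self).congr hf₂, convexOn_f₂.congr hf₂, ?_⟩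
  rw [← hf₂.image_eq, continuousOn_f₂.image_Ioo_of_strictMonoOn zero_le_one strictMonoOn_f₂,
    f₂_zero, f₂_one]
end

section
/- For each real number c ≥ 1/2, the function f₃(r) = r'^c K(r) is decreasing on [0,1), and it maps [0,1) onto (0, π/2]. -/
open Real Set Filter

/-!
Expanding `1 / √(1 - r² sin² θ)` by the binomial series and integrating termwise against the
Wallis integrals gives `K r = π/2 · S (r²)` with `S x = ∑ wₙ² xⁿ`, `wₙ = (2n-1)!!/(2n)!!`, so that
`r'^c K r = π/2 · (1 - x)^(c/2) S x` for `x = r²`. From `w_{n+1}/wₙ = (2n+1)/(2n+2)` one gets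
`4(n+1) w_{n+1}² ≤ (4n+1) wₙ²`, which says coefficientwise that `4(1 - x) S' ≤ S`; hence
`(1 - x)^a S x` has nonpositive derivative for `a ≥ 1/4`. The bound `wₙ² ≤ 1/(n+1)` gives
`S x ≤ -log (1 - x) / x`, so the function tends to `0` as `r → 1⁻`, and the intermediate value
theorem yields the range `(0, π/2]`.
-/

open scoped Topology

section PowerSeries

variable {b : ℕ → ℝ} {C x : ℝ}

lemma summable_succ_mul_pow (hx : |x| < 1) : Summable fun n : ℕ => ((n : ℝ) + 1) * x ^ n := by
  have h := summable_pow_mul_geometric_of_norm_lt_one 1 (by rwa [Real.norm_eq_abs])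
  simpa [add_mul] using h.add (summable_geometric_of_abs_lt_one hx)

lemma summable_mul_pow_of_abs_le_mul_succ (hb : ∀ n, |b n| ≤ C * ((n : ℝ) + 1)) (hx : |x| < 1) :
    Summable fun n => b n * x ^ n := by
  refine .of_norm_bounded ((summable_succ_mul_pow (x := |x|) (by rwa [abs_abs])).mul_left C)
    fun n => ?_
  rw [norm_mul, norm_pow, Real.norm_eq_abs, Real.norm_eq_abs, ← mul_assoc]
  exact mul_le_mul_of_nonneg_right (hb n) (by positivity)

lemma summable_mul_pow_of_abs_le (hb : ∀ n, |b n| ≤ C) (hx : |x| < 1) :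
    Summable fun n => b n * x ^ n :=
  summable_mul_pow_of_abs_le_mul_succ (C := C)
    (fun n => (hb n).trans (le_mul_of_one_le_right ((abs_nonneg _).trans (hb 0)) (by simp))) hx

lemma summable_natCast_mul_mul_pow (hb : ∀ n, |b n| ≤ C) (hx : |x| < 1) :
    Summable fun n : ℕ => (n : ℝ) * b n * x ^ n :=
  summable_mul_pow_of_abs_le_mul_succ (C := C) (fun n => by
    rw [abs_mul, Nat.abs_cast, mul_comm C]
    exact mul_le_mul (by simp) (hb n) (abs_nonneg _) (by positivity)) hx

lemma summable_succ_mul_mul_pow (hb : ∀ n, |b n| ≤ C) (hx : |x| < 1) :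
    Summable fun n : ℕ => ((n : ℝ) + 1) * b (n + 1) * x ^ n :=
  summable_mul_pow_of_abs_le_mul_succ (C := C) (fun n => by
    rw [abs_mul, abs_of_nonneg (by positivity), mul_comm C]
    exact mul_le_mul_of_nonneg_left (hb _) (by positivity)) hx

lemma hasDerivAt_tsum_mul_pow (hb : ∀ n, |b n| ≤ C) (hx : |x| < 1) :
    HasDerivAt (fun y => ∑' n, b n * y ^ n)
      (∑' n : ℕ, ((n : ℝ) + 1) * b (n + 1) * x ^ n) x := by
  obtain ⟨ρ, hxρ, hρ⟩ := exists_between hx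
  have hρ0 : 0 ≤ ρ := (abs_nonneg x).trans hxρ.le
  have hx_mem : x ∈ Metric.ball (0 : ℝ) ρ := by simpa using hxρ
  have hbound : Summable fun n : ℕ => C * (n * ρ ^ (n - 1)) := by
    refine ((summable_nat_add_iff 1).mp ?_).mul_left C
    simpa using summable_succ_mul_pow (x := ρ) (by rwa [abs_of_nonneg hρ0])
  have hderiv := hasDerivAt_tsum_of_isPreconnected hbound Metric.isOpen_ball
    (convex_ball (0 : ℝ) ρ).isPreconnected
    (g' := fun n y => b n * (n * y ^ (n - 1)))
    (fun n y _ => (hasDerivAt_pow n y).const_mul (b n)) (fun n y hy => ?_)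
    hx_mem (summable_mul_pow_of_abs_le hb hx) hx_mem
  · rw [Summable.tsum_eq_zero_add] at hderiv
    · simpa [mul_comm, mul_left_comm] using hderiv
    · refine (summable_nat_add_iff 1).mp ((summable_succ_mul_mul_pow hb hx).congr fun n => ?_)
      push_cast
      ring
  · rw [mem_ball_zero_iff, Real.norm_eq_abs] at hy
    rw [norm_mul, norm_mul, norm_pow, Real.norm_eq_abs, Real.norm_eq_abs, Real.norm_eq_abs,
      Nat.abs_cast]
    gcongr
    · exact (abs_nonneg _).trans (hb 0)
    · exact hb n

lemma mul_tsum_succ_mul_mul_pow (hb : ∀ n, |b n| ≤ C) (hx : |x| < 1) :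
    x * ∑' n : ℕ, ((n : ℝ) + 1) * b (n + 1) * x ^ n = ∑' n : ℕ, (n : ℝ) * b n * x ^ n := by
  rw [(summable_natCast_mul_mul_pow hb hx).tsum_eq_zero_add, ← tsum_mul_left]
  simp only [CharP.cast_eq_zero, zero_mul, zero_add, Nat.cast_add, Nat.cast_one, pow_succ]
  exact tsum_congr fun n => by ring

end PowerSeries

lemma image_Ico_eq_Ioc_of_antitoneOn {α β : Type*} [ConditionallyCompleteLinearOrder α]
    [TopologicalSpace α] [OrderTopology α] [DenselyOrdered α] [LinearOrder β]
    [TopologicalSpace β] [OrderTopology β] {f : α → β} {a b : α} {l : β} (hab : a < b)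
    (hf : ContinuousOn f (Ico a b)) (hf_anti : AntitoneOn f (Ico a b))
    (hf_lim : Tendsto f (𝓝[<] b) (𝓝 l)) (hf_gt : ∀ x ∈ Ico a b, l < f x) :
    f '' Ico a b = Ioc l (f a) := by
  refine Subset.antisymm ?_ fun y ⟨hly, hya⟩ => ?_
  · rintro _ ⟨x, hx, rfl⟩
    exact ⟨hf_gt x hx, hf_anti (left_mem_Ico.2 hab) hx hx.1⟩
  · have : (𝓝[<] b).NeBot := nhdsLT_neBot_of_exists_lt ⟨a, hab⟩
    obtain ⟨x₁, hx₁y, hx₁⟩ :=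
      ((hf_lim.eventually (gt_mem_nhds hly)).and (Ioo_mem_nhdsLT hab)).exists
    obtain ⟨x, hx, rfl⟩ := intermediate_value_Icc' hx₁.1.le
      (hf.mono (Icc_subset_Ico_right hx₁.2)) ⟨hx₁y.le, hya⟩
    exact ⟨x, Icc_subset_Ico_right hx₁.2 hx, rfl⟩

noncomputable def wallis : ℕ → ℝ
  | 0 => 1
  | n + 1 => wallis n * (2 * n + 1) / (2 * n + 2)

lemma wallis_succ (n : ℕ) : wallis (n + 1) = wallis n * (2 * n + 1) / (2 * n + 2) := rfl

lemma wallis_pos (n : ℕ) : 0 < wallis n := by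
  induction n with
  | zero => simp [wallis]
  | succ n ih => rw [wallis_succ]; positivity

lemma sq_wallis_mul_succ_le_one (n : ℕ) : wallis n ^ 2 * (n + 1) ≤ 1 := by
  induction n with
  | zero => simp [wallis]
  | succ n ih =>
    have h := wallis_pos n
    rw [wallis_succ, div_pow, mul_pow, div_mul_eq_mul_div, div_le_one (by positivity)]
    push_cast
    nlinarith [sq_nonneg (wallis n), mul_pos h h]

lemma four_mul_sq_wallis_succ_le (n : ℕ) :
    4 * ((n : ℝ) + 1) * wallis (n + 1) ^ 2 ≤ (4 * n + 1) * wallis n ^ 2 := by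
  rw [wallis_succ, div_pow, mul_pow, mul_div_assoc', div_le_iff₀ (by positivity)]
  have := sq_nonneg (wallis n)
  nlinarith [mul_nonneg (Nat.cast_nonneg n : (0 : ℝ) ≤ n) this]

lemma sq_wallis_le_one (n : ℕ) : wallis n ^ 2 ≤ 1 :=
  le_of_mul_le_of_one_le (sq_wallis_mul_succ_le_one n) zero_le_one (by simp)

lemma abs_wallis_le_one (n : ℕ) : |wallis n| ≤ 1 :=
  (sq_le_one_iff_abs_le_one _).mp (sq_wallis_le_one n)

lemma wallis_eq_choose (n : ℕ) : wallis n = Ring.choose ((1 / 2 : ℝ) + n - 1) n := by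
  have h : ∀ n : ℕ, (ascPochhammer ℝ n).eval (1 / 2) = n.factorial * wallis n := by
    intro n
    induction n with
    | zero => simp [wallis]
    | succ n ih =>
      rw [ascPochhammer_succ_eval, ih, wallis_succ, Nat.factorial_succ]
      push_cast
      field_simp
      ring
  rw [Ring.choose_eq_smul, Polynomial.descPochhammer_smeval_eq_ascPochhammer,
    Polynomial.ascPochhammer_smeval_eq_eval,
    show (1 / 2 : ℝ) + n - 1 - n + 1 = 1 / 2 by ring, h, smul_eq_mul, inv_mul_cancel_left₀]
  exact_mod_cast n.factorial_ne_zero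

lemma hasSum_wallis_mul_pow {t : ℝ} (ht : |t| < 1) :
    HasSum (fun n => wallis n * t ^ n) (1 / √(1 - t)) := by
  have h := (Real.one_div_one_sub_rpow_hasFPowerSeriesOnBall_zero (1 / 2)).hasSum
    (y := t) (by simpa [enorm_eq_nnnorm, ← NNReal.coe_lt_one] using ht)
  simp only [FormalMultilinearSeries.ofScalars_apply_eq, zero_add, smul_eq_mul] at h
  rw [Real.sqrt_eq_rpow]
  simpa [wallis_eq_choose] using h

lemma integral_sin_pow_two_mul (n : ℕ) :
    ∫ θ in (0 : ℝ)..(π / 2), sin θ ^ (2 * n) = π / 2 * wallis n := by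
  induction n with
  | zero => simp [wallis]
  | succ n ih =>
    rw [show 2 * (n + 1) = 2 * n + 2 by ring, integral_sin_pow, ih, wallis_succ]
    simp [field]

lemma hasSum_K {r : ℝ} (hr : |r| < 1) :
    HasSum (fun n => π / 2 * (wallis n ^ 2 * (r ^ 2) ^ n)) (K r) := by
  have hr2 : r ^ 2 < 1 := by simpa [sq_abs] using pow_lt_one₀ (abs_nonneg r) hr two_ne_zero
  have hlt : ∀ θ, |r ^ 2 * sin θ ^ 2| ≤ r ^ 2 := fun θ => by
    rw [abs_of_nonneg (by positivity)]
    exact mul_le_of_le_one_right (sq_nonneg r) (sin_sq_le_one θ)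
  have h := intervalIntegral.hasSum_integral_of_dominated_convergence (a := 0) (b := π / 2)
    (μ := MeasureTheory.volume) (F := fun n θ => wallis n * (r ^ 2 * sin θ ^ 2) ^ n)
    (f := fun θ => 1 / √(1 - r ^ 2 * sin θ ^ 2))
    (fun n _ => (r ^ 2) ^ n) (fun n => by fun_prop) (fun n => ?_) ?_ intervalIntegrable_const ?_
  · have hterm : ∀ n : ℕ, ∫ θ in (0 : ℝ)..(π / 2), wallis n * (r ^ 2 * sin θ ^ 2) ^ n
        = π / 2 * (wallis n ^ 2 * (r ^ 2) ^ n) := fun n => by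
      simp_rw [mul_pow, ← pow_mul, intervalIntegral.integral_const_mul, integral_sin_pow_two_mul]
      ring
    simp only [hterm] at h
    exact h
  · refine .of_forall fun θ _ => ?_
    rw [norm_mul, norm_pow, Real.norm_eq_abs, Real.norm_eq_abs]
    exact (mul_le_mul (abs_wallis_le_one n) (pow_le_pow_left₀ (abs_nonneg _) (hlt θ) n)
      (by positivity) zero_le_one).trans_eq (one_mul _)
  · exact .of_forall fun θ _ => summable_geometric_of_lt_one (sq_nonneg r) hr2
  · exact .of_forall fun θ _ => hasSum_wallis_mul_pow ((hlt θ).trans_lt hr2)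

/-- The hypergeometric series `₂F₁(1/2, 1/2; 1; x)`. -/
noncomputable def kSeries (x : ℝ) : ℝ := ∑' n, wallis n ^ 2 * x ^ n

lemma abs_sq_wallis_le_one (n : ℕ) : |wallis n ^ 2| ≤ 1 := by
  rw [abs_of_nonneg (sq_nonneg _)]
  exact sq_wallis_le_one n

lemma K_eq_kSeries {r : ℝ} (hr : |r| < 1) : K r = π / 2 * kSeries (r ^ 2) := by
  rw [kSeries, ← tsum_mul_left, (hasSum_K hr).tsum_eq]

lemma hasDerivAt_kSeries {x : ℝ} (hx : |x| < 1) :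
    HasDerivAt kSeries (∑' n : ℕ, ((n : ℝ) + 1) * wallis (n + 1) ^ 2 * x ^ n) x :=
  hasDerivAt_tsum_mul_pow abs_sq_wallis_le_one hx

lemma one_le_kSeries {x : ℝ} (hx₀ : 0 ≤ x) (hx₁ : x < 1) : 1 ≤ kSeries x := by
  have hx : |x| < 1 := by rwa [abs_of_nonneg hx₀]
  simpa [kSeries, wallis] using (summable_mul_pow_of_abs_le abs_sq_wallis_le_one hx).le_tsum 0
    fun n _ => by positivity

lemma four_mul_one_sub_mul_deriv_kSeries_le {x : ℝ} (hx₀ : 0 ≤ x) (hx₁ : x < 1) :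
    4 * (1 - x) * ∑' n : ℕ, ((n : ℝ) + 1) * wallis (n + 1) ^ 2 * x ^ n ≤ kSeries x := by
  have hx : |x| < 1 := by rwa [abs_of_nonneg hx₀]
  have hS := (summable_mul_pow_of_abs_le abs_sq_wallis_le_one hx).hasSum
  have hD := (summable_succ_mul_mul_pow abs_sq_wallis_le_one hx).hasSum
  have hxD := (summable_natCast_mul_mul_pow abs_sq_wallis_le_one hx).hasSum
  rw [← mul_tsum_succ_mul_mul_pow abs_sq_wallis_le_one hx] at hxD
  have hsum := (hS.sub (hD.mul_left 4)).add (hxD.mul_left 4)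
  have hnonneg := hsum.nonneg fun n => by
    have := mul_le_mul_of_nonneg_right (four_mul_sq_wallis_succ_le n) (pow_nonneg hx₀ n)
    nlinarith
  rw [kSeries]
  linarith

lemma kSeries_le_neg_log_div {x : ℝ} (hx₀ : 0 < x) (hx₁ : x < 1) :
    kSeries x ≤ -log (1 - x) / x := by
  have hx : |x| < 1 := by rwa [abs_of_pos hx₀]
  have hlog : HasSum (fun n : ℕ => x ^ n / (n + 1)) (-log (1 - x) / x) := by
    have h := (hasSum_pow_div_log_of_abs_lt_one hx).div_const x
    have hterm : (fun n : ℕ => x ^ (n + 1) / (n + 1) / x) = fun n : ℕ => x ^ n / (n + 1) := by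
      funext n
      field_simp
      ring
    rwa [hterm] at h
  refine hasSum_le (fun n => ?_) (summable_mul_pow_of_abs_le abs_sq_wallis_le_one hx).hasSum hlog
  rw [le_div_iff₀ (by positivity), mul_right_comm]
  exact mul_le_of_le_one_left (by positivity) (sq_wallis_mul_succ_le_one n)

section

variable {a x : ℝ}

lemma hasDerivAt_one_sub_rpow_mul_kSeries (hx : |x| < 1) :
    HasDerivAt (fun y => (1 - y) ^ a * kSeries y)
      (-a * (1 - x) ^ (a - 1) * kSeries x
        + (1 - x) ^ a * ∑' n : ℕ, ((n : ℝ) + 1) * wallis (n + 1) ^ 2 * x ^ n) x := by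
  have hpos : 0 < 1 - x := by linarith [le_abs_self x]
  have h : HasDerivAt (fun y => (1 - y) ^ a) (-1 * a * (1 - x) ^ (a - 1)) x :=
    ((hasDerivAt_id x).const_sub 1).rpow_const (Or.inl hpos.ne')
  exact (h.fun_mul (hasDerivAt_kSeries hx)).congr_deriv (by ring)

lemma antitoneOn_one_sub_rpow_mul_kSeries (ha : 1 / 4 ≤ a) :
    AntitoneOn (fun x => (1 - x) ^ a * kSeries x) (Ico 0 1) := by
  have habs : ∀ x ∈ Ico (0 : ℝ) 1, |x| < 1 := fun x hx => by rw [abs_of_nonneg hx.1]; exact hx.2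
  refine antitoneOn_of_hasDerivWithinAt_nonpos (convex_Ico 0 1)
    (fun x hx => (hasDerivAt_one_sub_rpow_mul_kSeries (habs x hx)).continuousAt.continuousWithinAt)
    (fun x hx => (hasDerivAt_one_sub_rpow_mul_kSeries
      (habs x (interior_subset hx))).hasDerivWithinAt) fun x hx => ?_
  rw [interior_Ico] at hx
  have hpos : 0 < 1 - x := by linarith [hx.2]
  have hkey := four_mul_one_sub_mul_deriv_kSeries_le hx.1.le hx.2
  have hS := one_le_kSeries hx.1.le hx.2
  have hp : 0 < (1 - x) ^ (a - 1) := rpow_pos_of_pos hpos _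
  have hsplit : (1 - x) ^ a = (1 - x) ^ (a - 1) * (1 - x) := by
    rw [rpow_sub_one hpos.ne', div_mul_cancel₀ _ hpos.ne']
  have hD : (1 - x) * ∑' n : ℕ, ((n : ℝ) + 1) * wallis (n + 1) ^ 2 * x ^ n ≤ a * kSeries x := by
    nlinarith
  rw [hsplit]
  nlinarith [mul_le_mul_of_nonneg_left hD hp.le]

lemma tendsto_one_sub_rpow_mul_kSeries (ha : 0 < a) :
    Tendsto (fun x => (1 - x) ^ a * kSeries x) (𝓝[<] 1) (𝓝 0) := by
  have h_sub : Tendsto (fun x : ℝ => 1 - x) (𝓝[<] 1) (𝓝[>] 0) := by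
    refine tendsto_nhdsWithin_of_tendsto_nhds_of_eventually_within _ ?_ ?_
    · simpa using ((continuous_sub_left (1 : ℝ)).tendsto 1).mono_left nhdsWithin_le_nhds
    · filter_upwards [self_mem_nhdsWithin] with x hx
      exact sub_pos.2 (mem_Iio.1 hx)
  have h_inv : Tendsto (fun x : ℝ => x⁻¹) (𝓝[<] 1) (𝓝 1) := by
    simpa using (tendsto_inv₀ one_ne_zero).mono_left (nhdsWithin_le_nhds (s := Iio (1 : ℝ)))
  have h_bound : Tendsto (fun x => -(log (1 - x) * (1 - x) ^ a) * x⁻¹) (𝓝[<] 1) (𝓝 0) := by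
    simpa using ((tendsto_log_mul_rpow_nhdsGT_zero ha).comp h_sub).neg.mul h_inv
  refine tendsto_of_tendsto_of_tendsto_of_le_of_le' tendsto_const_nhds h_bound ?_ ?_
  all_goals filter_upwards [Ioo_mem_nhdsLT (zero_lt_one' ℝ)] with x hx
  · have := one_le_kSeries hx.1.le hx.2
    have := rpow_pos_of_pos (sub_pos.2 hx.2) a
    positivity
  · calc (1 - x) ^ a * kSeries x ≤ (1 - x) ^ a * (-log (1 - x) / x) :=
          mul_le_mul_of_nonneg_left (kSeries_le_neg_log_div hx.1 hx.2)
            (rpow_nonneg (sub_pos.2 hx.2).le a)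
      _ = -(log (1 - x) * (1 - x) ^ a) * x⁻¹ := by ring

end

lemma sqrt_one_sub_sq_rpow_mul_K {c r : ℝ} (hr : |r| < 1) :
    √(1 - r ^ 2) ^ c * K r = π / 2 * ((1 - r ^ 2) ^ (c / 2) * kSeries (r ^ 2)) := by
  have hr2 : r ^ 2 ≤ 1 := by nlinarith [abs_nonneg r, sq_abs r]
  rw [K_eq_kSeries hr, sqrt_eq_rpow, ← rpow_mul (by linarith)]
  ring_nf

section

variable {c : ℝ}

lemma antitoneOn_sqrt_one_sub_sq_rpow_mul_K (hc : 1 / 2 ≤ c) :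
    AntitoneOn (fun r : ℝ => √(1 - r ^ 2) ^ c * K r) (Ico 0 1) := by
  intro r hr s hs hrs
  have hr1 : |r| < 1 := by rw [abs_of_nonneg hr.1]; exact hr.2
  have hs1 : |s| < 1 := by rw [abs_of_nonneg hs.1]; exact hs.2
  simp only [sqrt_one_sub_sq_rpow_mul_K hr1, sqrt_one_sub_sq_rpow_mul_K hs1]
  refine mul_le_mul_of_nonneg_left (antitoneOn_one_sub_rpow_mul_kSeries (by linarith)
    ⟨sq_nonneg r, ?_⟩ ⟨sq_nonneg s, ?_⟩ (pow_le_pow_left₀ hr.1 hrs 2)) pi_div_two_pos.le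
  · nlinarith [hr.1, hr.2]
  · nlinarith [hs.1, hs.2]

lemma continuousOn_sqrt_one_sub_sq_rpow_mul_K :
    ContinuousOn (fun r : ℝ => √(1 - r ^ 2) ^ c * K r) (Ioo (-1) 1) := by
  intro r hr
  have hr1 : |r| < 1 := abs_lt.2 hr
  have hr2 : |r ^ 2| < 1 := by rw [abs_pow]; exact pow_lt_one₀ (abs_nonneg r) hr1 two_ne_zero
  have heq : (fun r => π / 2 * ((1 - r ^ 2) ^ (c / 2) * kSeries (r ^ 2)))
      =ᶠ[𝓝 r] fun r : ℝ => √(1 - r ^ 2) ^ c * K r := by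
    filter_upwards [Ioo_mem_nhds hr.1 hr.2] with s hs
    exact (sqrt_one_sub_sq_rpow_mul_K (abs_lt.2 hs)).symm
  refine (ContinuousAt.congr_of_eventuallyEq ?_ heq.symm).continuousWithinAt
  exact continuousAt_const.mul ((hasDerivAt_one_sub_rpow_mul_kSeries (a := c / 2)
    hr2).continuousAt.comp (f := fun r : ℝ => r ^ 2) (continuous_pow 2).continuousAt)

lemma tendsto_sqrt_one_sub_sq_rpow_mul_K (hc : 0 < c) :
    Tendsto (fun r : ℝ => √(1 - r ^ 2) ^ c * K r) (𝓝[<] 1) (𝓝 0) := by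
  have h_sq : Tendsto (fun r : ℝ => r ^ 2) (𝓝[<] 1) (𝓝[<] 1) := by
    refine tendsto_nhdsWithin_of_tendsto_nhds_of_eventually_within _ ?_ ?_
    · simpa using ((continuous_pow 2).tendsto (1 : ℝ)).mono_left nhdsWithin_le_nhds
    · filter_upwards [Ioo_mem_nhdsLT (zero_lt_one' ℝ)] with r hr
      exact pow_lt_one₀ hr.1.le hr.2 two_ne_zero
  have h := ((tendsto_one_sub_rpow_mul_kSeries (half_pos hc)).comp h_sq).const_mul (π / 2)
  rw [mul_zero] at h
  refine h.congr' ?_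
  filter_upwards [Ioo_mem_nhdsLT (zero_lt_one' ℝ)] with r hr
  exact (sqrt_one_sub_sq_rpow_mul_K (by rw [abs_of_pos hr.1]; exact hr.2)).symm

lemma sqrt_one_sub_sq_rpow_mul_K_pos {r : ℝ} (hr : |r| < 1) : 0 < √(1 - r ^ 2) ^ c * K r := by
  have hr2 : r ^ 2 < 1 := by simpa [sq_abs] using pow_lt_one₀ (abs_nonneg r) hr two_ne_zero
  have := one_le_kSeries (sq_nonneg r) hr2
  have := rpow_pos_of_pos (sub_pos.2 hr2) (c / 2)
  rw [sqrt_one_sub_sq_rpow_mul_K hr]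
  positivity

end

theorem stmt_10 (c : ℝ) (hc : 1/2 ≤ c) :
    AntitoneOn (fun r : ℝ => Real.sqrt (1 - r^2) ^ c * K r) (Set.Ico (0:ℝ) 1) ∧
    (fun r : ℝ => Real.sqrt (1 - r^2) ^ c * K r) '' Set.Ico (0:ℝ) 1 = Set.Ioc (0:ℝ) (π/2) := by
  have h_anti := antitoneOn_sqrt_one_sub_sq_rpow_mul_K hc
  refine ⟨h_anti, ?_⟩
  have h_zero : √(1 - (0 : ℝ) ^ 2) ^ c * K 0 = π / 2 := by simp [K]
  rw [image_Ico_eq_Ioc_of_antitoneOn one_pos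
    (continuousOn_sqrt_one_sub_sq_rpow_mul_K.mono (Ico_subset_Ioo_left (by norm_num)))
    h_anti (tendsto_sqrt_one_sub_sq_rpow_mul_K (by linarith))
    (fun r hr => sqrt_one_sub_sq_rpow_mul_K_pos (by rw [abs_of_nonneg hr.1]; exact hr.2)), h_zero]
end
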